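/- Let (P, L) be an intersecting r-uniform linear system with r ≥ 2 an even integer. If ν₂ = r + 1, then τ = (r + 2)/2. -/

import Mathlib

/-!
Let `R` be a 2-packing of size `r + 1`. Every line `a ∈ R` meets the other `r` lines of `R` in
pairwise distinct points, so each of the `r` points of `a` lies on exactly two lines of `R`.
A line `ℓ ∉ R` would meet each line of `R` in exactly one point, and counting these incidences
through the points of `ℓ`, each of which lies on `0` or `2` lines of `R`, shows that `r + 1` is
even. Hence `L = R`, and as no point lies on three lines, a transversal has at least
`(r + 1) / 2` points. Conversely, pairing up the lines of an intersecting family and taking one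
common point of each pair gives a transversal of size `⌈(r + 1) / 2⌉`.
-/

open Finset

variable {P : Type*} [Fintype P] [DecidableEq P]

/-- `T` is a transversal of the set system `L`: it meets every member of `L`. -/
def IsTransversal (L : Finset (Finset P)) (T : Finset P) : Prop :=
  ∀ ℓ ∈ L, (T ∩ ℓ).Nonempty

/-- The transversal number τ: minimum size of a transversal. -/
noncomputable def tau (L : Finset (Finset P)) : ℕ :=
  sInf {n | ∃ T : Finset P, T.card = n ∧ IsTransversal L T}

/-- `M` is a matching of `L`: a pairwise disjoint subfamily. -/
def IsMatching (L M : Finset (Finset P)) : Prop :=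
  M ⊆ L ∧ ∀ a ∈ M, ∀ b ∈ M, a ≠ b → a ∩ b = ∅

/-- The matching number ν: maximum size of a matching. -/
noncomputable def matchingNumber (L : Finset (Finset P)) : ℕ :=
  sSup {n | ∃ M : Finset (Finset P), IsMatching L M ∧ M.card = n}

/-- `R` is a 2-packing of `L`: no three distinct members share a common point. -/
def IsTwoPacking (L R : Finset (Finset P)) : Prop :=
  R ⊆ L ∧ ∀ a ∈ R, ∀ b ∈ R, ∀ c ∈ R, a ≠ b → a ≠ c → b ≠ c → a ∩ b ∩ c = ∅

/-- The 2-packing number ν₂. -/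
noncomputable def nu2 (L : Finset (Finset P)) : ℕ :=
  sSup {n | ∃ R : Finset (Finset P), IsTwoPacking L R ∧ R.card = n}

/-- A linear system: two distinct lines share at most one point. -/
def Linear (L : Finset (Finset P)) : Prop :=
  ∀ a ∈ L, ∀ b ∈ L, a ≠ b → (a ∩ b).card ≤ 1

/-- Intersecting: every two lines meet. -/
def Intersecting (L : Finset (Finset P)) : Prop :=
  ∀ a ∈ L, ∀ b ∈ L, (a ∩ b).Nonempty

/-- `r`-uniform: every line has exactly `r` points. -/
def Uniform (L : Finset (Finset P)) (r : ℕ) : Prop :=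
  ∀ ℓ ∈ L, ℓ.card = r

/-- `r`-partite: the points partition into `r` sides, each meeting every line exactly once. -/
def Partite (L : Finset (Finset P)) (r : ℕ) : Prop :=
  ∃ X : Fin r → Finset P, (∀ p : P, ∃! i, p ∈ X i) ∧
    ∀ ℓ ∈ L, ∀ i, (ℓ ∩ X i).card = 1

/-- The degree of a point: the number of lines through it. -/
def deg (L : Finset (Finset P)) (p : P) : ℕ :=
  (L.filter (fun ℓ => p ∈ ℓ)).card

section

omit [Fintype P]

lemma sum_deg_eq_sum_card_inter (R : Finset (Finset P)) (s : Finset P) :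
    ∑ p ∈ s, deg R p = ∑ b ∈ R, (s ∩ b).card := by
  simpa only [deg, bipartiteAbove, bipartiteBelow, filter_mem_eq_inter] using
    sum_card_bipartiteAbove_eq_sum_card_bipartiteBelow (fun p b => p ∈ b) (s := s) (t := R)

lemma Intersecting.subset {L R : Finset (Finset P)} (hL : Intersecting L) (hRL : R ⊆ L) :
    Intersecting R :=
  fun a ha b hb => hL a (hRL ha) b (hRL hb)

lemma Intersecting.exists_isTransversal_card_le {L : Finset (Finset P)} (hL : Intersecting L) :
    ∃ T : Finset P, IsTransversal L T ∧ T.card ≤ (L.card + 1) / 2 := by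
  induction L using Finset.strongInduction with
  | H L ih =>
    obtain hle | hlt := le_or_gt L.card 1
    · obtain ⟨a, hsub⟩ := card_le_one_iff_subset_singleton.1 hle
      obtain rfl | rfl := subset_singleton_iff.1 hsub
      · exact ⟨∅, by simp [IsTransversal]⟩
      · obtain ⟨p, hp⟩ := hL a (mem_singleton_self a) a (mem_singleton_self a)
        refine ⟨{p}, ?_, by simp⟩
        simp only [IsTransversal, mem_singleton, forall_eq,
          singleton_inter_of_mem (inter_self a ▸ hp), singleton_nonempty]
    · obtain ⟨a, ha, b, hb, hab⟩ := one_lt_card.1 hlt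
      set L' := (L.erase a).erase b
      have hL'L : L' ⊂ L :=
        (erase_ssubset (mem_erase.2 ⟨hab.symm, hb⟩)).trans (erase_ssubset ha)
      have hcard : L'.card + 2 = L.card := by
        rw [card_erase_of_mem (mem_erase.2 ⟨hab.symm, hb⟩), card_erase_of_mem ha]
        omega
      obtain ⟨T, hT, hTcard⟩ := ih L' hL'L (hL.subset hL'L.subset)
      obtain ⟨p, hp⟩ := hL a ha b hb
      refine ⟨insert p T, fun ℓ hℓ => ?_, (card_insert_le p T).trans (by omega)⟩
      rcases eq_or_ne ℓ a with rfl | hℓa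
      · exact ⟨p, mem_inter.2 ⟨mem_insert_self p T, (mem_inter.1 hp).1⟩⟩
      rcases eq_or_ne ℓ b with rfl | hℓb
      · exact ⟨p, mem_inter.2 ⟨mem_insert_self p T, (mem_inter.1 hp).2⟩⟩
      obtain ⟨q, hq⟩ := hT ℓ (mem_erase.2 ⟨hℓb, mem_erase.2 ⟨hℓa, hℓ⟩⟩)
      exact ⟨q, inter_subset_inter_right (subset_insert p T) hq⟩

namespace IsTwoPacking

variable {L R : Finset (Finset P)}

lemma deg_le_two (hR : IsTwoPacking L R) (p : P) : deg R p ≤ 2 := by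
  by_contra! h
  obtain ⟨a, ha, b, hb, c, hc, hab, hac, hbc⟩ := two_lt_card.1 h
  simp only [mem_filter] at ha hb hc
  have hp : p ∈ a ∩ b ∩ c := by simp [ha.2, hb.2, hc.2]
  simp [hR.2 a ha.1 b hb.1 c hc.1 hab hac hbc] at hp

lemma card_le_two_mul_card (hR : IsTwoPacking L R) {T : Finset P}
    (hT : IsTransversal R T) : R.card ≤ 2 * T.card :=
  calc R.card = ∑ _ ∈ R, 1 := card_eq_sum_ones R
    _ ≤ ∑ b ∈ R, (T ∩ b).card := sum_le_sum fun b hb => card_pos.2 (hT b hb)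
    _ ≤ T.card * 2 := sum_card_inter_le fun p _ => hR.deg_le_two p
    _ = 2 * T.card := mul_comm _ _

lemma deg_eq_two (hR : IsTwoPacking L R) (hL : Intersecting L) {a : Finset P}
    (ha : a ∈ R) (hlt : a.card < R.card) {p : P} (hp : p ∈ a) : deg R p = 2 := by
  have hsum : ∑ q ∈ a, 2 ≤ ∑ q ∈ a, deg R q :=
    calc ∑ q ∈ a, 2 ≤ a.card + (R.erase a).card := by
          rw [sum_const, smul_eq_mul, card_erase_of_mem ha]; omega
      _ ≤ (a ∩ a).card + ∑ b ∈ R.erase a, (a ∩ b).card := by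
          rw [inter_self, card_eq_sum_ones (R.erase a)]
          gcongr with b hb
          exact card_pos.2 (hL a (hR.1 ha) b (hR.1 (mem_of_mem_erase hb)))
      _ = ∑ q ∈ a, deg R q := by
          rw [add_sum_erase R (fun b => (a ∩ b).card) ha, sum_deg_eq_sum_card_inter]
  exact ((sum_eq_sum_iff_of_le fun q _ => hR.deg_le_two q).1
    (hsum.antisymm' (sum_le_sum fun q _ => hR.deg_le_two q)) p hp)

lemma even_deg (hR : IsTwoPacking L R) (hL : Intersecting L)
    (hlt : ∀ a ∈ R, a.card < R.card) (p : P) : Even (deg R p) := by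
  by_cases h : ∃ a ∈ R, p ∈ a
  · obtain ⟨a, ha, hp⟩ := h
    rw [hR.deg_eq_two hL ha (hlt a ha) hp]
    exact even_two
  · push Not at h
    rw [deg, filter_false_of_mem h, card_empty]
    exact Even.zero

lemma subset_of_odd_card (hR : IsTwoPacking L R) (hlin : Linear L)
    (hL : Intersecting L) (hlt : ∀ a ∈ R, a.card < R.card) (hodd : Odd R.card) : L ⊆ R := by
  intro ℓ hℓ
  by_contra hℓR
  have hmeet : ∀ b ∈ R, (ℓ ∩ b).card = 1 := fun b hb =>
    le_antisymm (hlin ℓ hℓ b (hR.1 hb) (ne_of_mem_of_not_mem hb hℓR).symm)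
      (card_pos.2 (hL ℓ hℓ b (hR.1 hb)))
  have heven : Even R.card := by
    rw [card_eq_sum_ones, ← sum_congr rfl hmeet, ← sum_deg_eq_sum_card_inter]
    exact even_sum _ fun p _ => hR.even_deg hL hlt p
  exact (Nat.not_even_iff_odd.2 hodd) heven

end IsTwoPacking

lemma exists_isTwoPacking_card_eq_nu2 (L : Finset (Finset P)) :
    ∃ R, IsTwoPacking L R ∧ R.card = nu2 L :=
  Nat.sSup_mem (s := {n | ∃ R, IsTwoPacking L R ∧ R.card = n})
    ⟨0, ∅, ⟨empty_subset L, by simp⟩, rfl⟩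
    ⟨L.card, by rintro n ⟨R, hR, rfl⟩; exact card_le_card hR.1⟩

lemma exists_isTransversal_card_eq_tau {L : Finset (Finset P)}
    (h : ∃ T : Finset P, IsTransversal L T) : ∃ T, IsTransversal L T ∧ T.card = tau L := by
  obtain ⟨T, hT⟩ := h
  obtain ⟨T₀, hcard, hT₀⟩ :=
    Nat.sInf_mem (s := {n | ∃ T : Finset P, T.card = n ∧ IsTransversal L T}) ⟨T.card, T, rfl, hT⟩
  exact ⟨T₀, hT₀, hcard⟩

lemma tau_le_card {L : Finset (Finset P)} {T : Finset P} (hT : IsTransversal L T) :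
    tau L ≤ T.card :=
  Nat.sInf_le ⟨T, rfl, hT⟩

end

theorem stmt6_general (r : ℕ) (heven : Even r) (L : Finset (Finset P))
    (hlin : Linear L) (hint : Intersecting L) (hunif : Uniform L r)
    (hnu2 : nu2 L = r + 1) :
    tau L = (r + 2) / 2 := by
  obtain ⟨R, hR, hRcard⟩ := exists_isTwoPacking_card_eq_nu2 L
  rw [hnu2] at hRcard
  have hLR : L = R := by
    refine (hR.subset_of_odd_card hlin hint (fun a ha => ?_) ?_).antisymm hR.1
    · rw [hunif a (hR.1 ha), hRcard]; omega
    · rw [hRcard]; exact heven.add_one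
  subst hLR
  obtain ⟨T, hT, hTcard⟩ := hint.exists_isTransversal_card_le
  obtain ⟨T₀, hT₀, hT₀card⟩ := exists_isTransversal_card_eq_tau ⟨T, hT⟩
  have hlower := hR.card_le_two_mul_card hT₀
  have hupper := tau_le_card hT
  obtain ⟨k, rfl⟩ := heven
  omega

theorem stmt6 (r : ℕ) (hr : 2 ≤ r) (heven : Even r) (L : Finset (Finset P))
    (hlin : Linear L) (hint : Intersecting L) (hunif : Uniform L r)
    (hnu2 : nu2 L = r + 1) :
    tau L = (r + 2) / 2 :=
  stmt6_general r heven L hlin hint hunif hnu2
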